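/- arXiv:2211.10669 — 3 statements merged into one kernel-verified Lean document; each statement's English description precedes it below -/
import Mathlib

section
/- Let n ≥ 1 and let μ, ξ be partitions with at most n parts. The Kostka number K_{μξ} is nonzero (i.e., there exists at least one semistandard Young tableau of shape μ and content ξ) if and only if |ξ| = |μ| and ξ_1 + ξ_2 + ⋯ + ξ_i ≤ μ_1 + μ_2 + ⋯ + μ_i for every i ≥ 1 (i.e., if and only if ξ ⊴ μ in the dominance order). -/
open scoped BigOperators

/-- Extend a `Fin n`-indexed tuple of natural numbers to all of `ℕ` by zeros. -/
def extendTuple (n : ℕ) (μ : Fin n → ℕ) : ℕ → ℕ := fun i =>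
  if h : i < n then μ ⟨i, h⟩ else 0

/-- A semistandard filling of the Young diagram whose `i`-th row has `shape i` boxes
(rows and columns are 0-indexed): entries weakly increase along each row, strictly
increase down each column, and are zero outside the diagram. -/
structure SSYT (shape : ℕ → ℕ) where
  entry : ℕ → ℕ → ℕ
  rowWeak : ∀ i j1 j2, j1 ≤ j2 → j2 < shape i → entry i j1 ≤ entry i j2
  colStrict : ∀ i1 i2 j, i1 < i2 → j < shape i1 → j < shape i2 → entry i1 j < entry i2 j
  zeros : ∀ i j, ¬ j < shape i → entry i j = 0

/-- The number of boxes of the diagram in which the filling `T` takes the value `k`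
(entry values are 0-indexed: value `k` represents the letter `k+1`). -/
noncomputable def contentCount {shape : ℕ → ℕ} (T : SSYT shape) (k : ℕ) : ℕ :=
  Nat.card {p : ℕ × ℕ // p.2 < shape p.1 ∧ T.entry p.1 p.2 = k}


open Finset

lemma SSYT.ext' {s : ℕ → ℕ} {T1 T2 : SSYT s} (h : T1.entry = T2.entry) : T1 = T2 := by
  cases T1; cases T2; simp_all

lemma extendTuple_lt {n : ℕ} (μ : Fin n → ℕ) {i : ℕ} (h : i < n) :
    extendTuple n μ i = μ ⟨i, h⟩ := dif_pos h

lemma extendTuple_zero {n : ℕ} (μ : Fin n → ℕ) {i : ℕ} (h : n ≤ i) :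
    extendTuple n μ i = 0 := dif_neg (by omega)

lemma extendTuple_antitone {n : ℕ} {μ : Fin n → ℕ} (h : Antitone μ) :
    Antitone (extendTuple n μ) := by
  apply antitone_nat_of_succ_le
  intro i
  unfold extendTuple
  by_cases h1 : i + 1 < n
  · rw [dif_pos h1, dif_pos (by omega : i < n)]
    exact h (by simp)
  · rw [dif_neg h1]; exact Nat.zero_le _

lemma sum_extendTuple {n : ℕ} (μ : Fin n → ℕ) :
    ∑ i ∈ range n, extendTuple n μ i = ∑ i, μ i := by
  rw [← Fin.sum_univ_eq_sum_range]
  exact Finset.sum_congr rfl fun i _ => by rw [extendTuple_lt μ i.isLt]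

lemma entry_ge_row {s : ℕ → ℕ} (hs : Antitone s) (T : SSYT s) :
    ∀ i j, j < s i → i ≤ T.entry i j := by
  intro i
  induction i with
  | zero => intro j _; exact Nat.zero_le _
  | succ i ih =>
    intro j hj
    have hj' : j < s i := lt_of_lt_of_le hj (hs (Nat.le_succ i))
    have h2 := T.colStrict i (i+1) j (Nat.lt_succ_self i) hj' hj
    have := ih j hj'
    omega

lemma card_filter_product (A B : ℕ) (Q : ℕ → ℕ → Prop) [∀ i j, Decidable (Q i j)] :
    ((range A ×ˢ range B).filter (fun p => Q p.1 p.2)).card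
      = ∑ i ∈ range A, ((range B).filter (fun j => Q i j)).card := by
  rw [Finset.card_filter, Finset.sum_product _ _ _]
  refine Finset.sum_congr rfl fun i _ => ?_
  rw [Finset.card_filter]

lemma sum_card_filter_lt (S : Finset ℕ) (f : ℕ → ℕ) (m : ℕ) :
    ∑ v ∈ range m, (S.filter (fun j => f j = v)).card = (S.filter (fun j => f j < m)).card := by
  induction m with
  | zero => simp
  | succ m ih =>
    rw [Finset.sum_range_succ, ih, ← Finset.card_union_of_disjoint]
    · congr 1
      ext j
      simp only [Finset.mem_union, Finset.mem_filter]
      constructor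
      · rintro (⟨h1, h2⟩ | ⟨h1, h2⟩) <;> exact ⟨h1, by omega⟩
      · rintro ⟨h1, h2⟩
        rcases Nat.lt_succ_iff_lt_or_eq.mp h2 with h | h
        · exact Or.inl ⟨h1, h⟩
        · exact Or.inr ⟨h1, h⟩
    · rw [Finset.disjoint_left]
      intro j h1 h2
      simp only [Finset.mem_filter] at h1 h2
      omega

lemma contentCount_eq_sum {s : ℕ → ℕ} (hs : Antitone s) {N : ℕ}
    (hsupp : ∀ i, N ≤ i → s i = 0) (T : SSYT s) (k : ℕ) :
    contentCount T k
      = ∑ i ∈ range N, ((range (s i)).filter (fun j => T.entry i j = k)).card := by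
  classical
  have hmem : ∀ p : ℕ × ℕ, (p.2 < s p.1 ∧ T.entry p.1 p.2 = k) ↔
      p ∈ (range N ×ˢ range (s 0)).filter (fun p => p.2 < s p.1 ∧ T.entry p.1 p.2 = k) := by
    intro p
    simp only [mem_filter, mem_product, mem_range]
    constructor
    · rintro ⟨h1, h2⟩
      have hp1 : p.1 < N := by
        by_contra hcon
        push_neg at hcon
        rw [hsupp p.1 hcon] at h1
        omega
      exact ⟨⟨hp1, lt_of_lt_of_le h1 (hs (Nat.zero_le p.1))⟩, h1, h2⟩
    · tauto
  rw [contentCount, Nat.card_congr (Equiv.subtypeEquivRight hmem), Nat.card_eq_finsetCard,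
    card_filter_product N (s 0) (fun i j => j < s i ∧ T.entry i j = k)]
  apply Finset.sum_congr rfl
  intro i _
  congr 1
  ext j
  simp only [mem_filter, mem_range]
  constructor
  · rintro ⟨_, h2, h3⟩; exact ⟨h2, h3⟩
  · rintro ⟨h1, h2⟩; exact ⟨lt_of_lt_of_le h1 (hs (Nat.zero_le i)), h1, h2⟩

lemma exists_filling (K : ℕ) : ∀ (t c : ℕ → ℕ), Antitone t → Antitone c →
    (∀ i, K ≤ i → t i = 0) → (∀ i, K ≤ i → c i = 0) →
    (∀ k, ∑ i ∈ range k, c i ≤ ∑ i ∈ range k, t i) →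
    (∑ i ∈ range K, c i = ∑ i ∈ range K, t i) →
    ∃ e : ℕ → ℕ → ℕ,
      (∀ i j1 j2, j1 ≤ j2 → j2 < t i → e i j1 ≤ e i j2) ∧
      (∀ i1 i2 j, i1 < i2 → j < t i1 → j < t i2 → e i1 j < e i2 j) ∧
      (∀ i j, ¬ j < t i → e i j = 0) ∧
      (∀ i j, j < t i → e i j < K) ∧
      (∀ k, ∑ i ∈ range K, ((range (t i)).filter (fun j => e i j = k)).card = c k) := by
  induction K with
  | zero =>
    intro t c ht hc ht0 hc0 hdom htot
    refine ⟨fun _ _ => 0, ?_, ?_, ?_, ?_, ?_⟩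
    · intro i j1 j2 _ hj2; exact le_rfl
    · intro i1 i2 j _ hj1 _; have := ht0 i1 (Nat.zero_le i1); omega
    · intro i j _; rfl
    · intro i j hj; have := ht0 i (Nat.zero_le i); omega
    · intro k; rw [Finset.sum_range_zero, hc0 k (Nat.zero_le k)]
  | succ K ih =>
    intro t c ht hc ht0 hc0 hdom htot
    set a := c K with ha
    have hc0t0 : c 0 ≤ t 0 := by
      have := hdom 1
      simpa using this
    have ha0 : a ≤ t 0 := le_trans (hc (Nat.zero_le K)) hc0t0
    have htK : t K ≤ a := by
      have h1 := hdom K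
      have h2 : ∑ i ∈ range K, c i + c K = ∑ i ∈ range K, t i + t K := by
        have := htot
        rwa [Finset.sum_range_succ, Finset.sum_range_succ] at this
      omega
    set ρ : ℕ → ℕ := fun i => (t i - a) + min a (t (i+1)) with hρdef
    have hρ_le : ∀ i, ρ i ≤ t i := by
      intro i
      have h9 : t (i+1) ≤ t i := ht (by omega : i ≤ i + 1)
      simp only [hρdef]
      omega
    have hρ_ge : ∀ i, t (i+1) ≤ ρ i := by
      intro i
      have h9 : t (i+1) ≤ t i := ht (by omega : i ≤ i + 1)
      simp only [hρdef]
      omega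
    have hρ_anti : Antitone ρ := antitone_nat_of_succ_le (fun i => le_trans (hρ_le (i+1)) (hρ_ge i))
    have hρ0 : ∀ i, K ≤ i → ρ i = 0 := by
      intro i hi
      have h1 : ρ K = 0 := by
        have h2 := ht0 (K+1) (by omega)
        simp only [hρdef, h2]
        omega
      have := hρ_anti hi
      omega
    have hsum : ∀ k, ∑ i ∈ range k, ρ i + a = ∑ i ∈ range k, t i + min a (t k) := by
      intro k
      induction k with
      | zero => simp; omega
      | succ k ihk =>
        rw [Finset.sum_range_succ, Finset.sum_range_succ]
        have hrk : ρ k = (t k - a) + min a (t (k+1)) := rfl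
        omega
    set c' : ℕ → ℕ := fun i => if i < K then c i else 0 with hc'def
    have hc'_anti : Antitone c' := by
      intro i j hij
      simp only [hc'def]
      by_cases h1 : j < K
      · rw [if_pos h1, if_pos (by omega : i < K)]
        exact hc hij
      · rw [if_neg h1]; exact Nat.zero_le _
    have hc'0 : ∀ i, K ≤ i → c' i = 0 := by
      intro i hi
      simp only [hc'def]
      rw [if_neg (by omega)]
    have hc'eq : ∀ m, m ≤ K → ∑ i ∈ range m, c' i = ∑ i ∈ range m, c i := by
      intro m hm
      refine Finset.sum_congr rfl fun i hi => ?_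
      simp only [hc'def]
      rw [if_pos (by simp at hi; omega)]
    have hdomle : ∀ k, k ≤ K → ∑ i ∈ range k, c' i ≤ ∑ i ∈ range k, ρ i := by
      intro k hk
      rw [hc'eq k hk]
      have h1 := hsum k
      have h2 := hdom k
      have h3 := hdom (k+1)
      rw [Finset.sum_range_succ, Finset.sum_range_succ] at h3
      have h4 : a ≤ c k := hc hk
      omega
    have hdom' : ∀ k, ∑ i ∈ range k, c' i ≤ ∑ i ∈ range k, ρ i := by
      intro k
      rcases le_or_gt k K with hk | hk
      · exact hdomle k hk
      · have h5 : ∑ i ∈ range k, c' i = ∑ i ∈ range K, c' i :=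
          (Finset.sum_subset (Finset.range_subset_range.mpr hk.le)
            (fun x _ hx => hc'0 x (by simp at hx; omega))).symm
        have h6 : ∑ i ∈ range K, ρ i ≤ ∑ i ∈ range k, ρ i :=
          Finset.sum_le_sum_of_subset (Finset.range_subset_range.mpr hk.le)
        rw [h5]
        exact le_trans (hdomle K le_rfl) h6
    have htot' : ∑ i ∈ range K, c' i = ∑ i ∈ range K, ρ i := by
      rw [hc'eq K le_rfl]
      have h1 := hsum K
      have h2 : ∑ i ∈ range K, c i + c K = ∑ i ∈ range K, t i + t K := by
        have := htot
        rwa [Finset.sum_range_succ, Finset.sum_range_succ] at this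
      omega
    obtain ⟨e', hw', hcs', hz', hb', hcont'⟩ := ih ρ c' hρ_anti hc'_anti hρ0 hc'0 hdom' htot'
    set e : ℕ → ℕ → ℕ := fun i j => if j < ρ i then e' i j else if j < t i then K else 0
      with hedef
    have heval1 : ∀ i j, j < ρ i → e i j = e' i j := by
      intro i j h
      simp only [hedef]
      rw [if_pos h]
    have heval2 : ∀ i j, ¬ j < ρ i → j < t i → e i j = K := by
      intro i j h1 h2
      simp only [hedef]
      rw [if_neg h1, if_pos h2]
    refine ⟨e, ?_, ?_, ?_, ?_, ?_⟩
    · -- rowWeak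
      intro i j1 j2 h12 hj2
      by_cases h2 : j2 < ρ i
      · rw [heval1 i j1 (by omega), heval1 i j2 h2]
        exact hw' i j1 j2 h12 h2
      · rw [heval2 i j2 h2 hj2]
        by_cases h1 : j1 < ρ i
        · rw [heval1 i j1 h1]
          exact le_of_lt (hb' i j1 h1)
        · rw [heval2 i j1 h1 (by omega)]
    · -- colStrict
      intro i1 i2 j h12 hj1 hj2
      have hkey : t i2 ≤ ρ i1 := le_trans (ht (by omega : i1 + 1 ≤ i2)) (hρ_ge i1)
      have hj1ρ : j < ρ i1 := lt_of_lt_of_le hj2 hkey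
      rw [heval1 i1 j hj1ρ]
      by_cases h2 : j < ρ i2
      · rw [heval1 i2 j h2]
        exact hcs' i1 i2 j h12 hj1ρ h2
      · rw [heval2 i2 j h2 hj2]
        exact hb' i1 j hj1ρ
    · -- zeros
      intro i j hj
      have h1 : ¬ j < ρ i := fun h => hj (lt_of_lt_of_le h (hρ_le i))
      simp only [hedef]
      rw [if_neg h1, if_neg hj]
    · -- bound
      intro i j hj
      by_cases h1 : j < ρ i
      · rw [heval1 i j h1]
        exact lt_trans (hb' i j h1) (Nat.lt_succ_self K)
      · rw [heval2 i j h1 hj]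
        exact Nat.lt_succ_self K
    · -- content
      intro k
      by_cases hk : k = K
      · rw [hk]
        have hrow : ∀ i, ((range (t i)).filter (fun j => e i j = K)).card = t i - ρ i := by
          intro i
          have hset : (range (t i)).filter (fun j => e i j = K) = range (t i) \ range (ρ i) := by
            ext j
            simp only [mem_filter, mem_sdiff, mem_range]
            constructor
            · rintro ⟨hj, hjk⟩
              refine ⟨hj, fun hρj => ?_⟩
              rw [heval1 i j hρj] at hjk
              exact absurd hjk (Nat.ne_of_lt (hb' i j hρj))
            · rintro ⟨hj, hρj⟩
              exact ⟨hj, heval2 i j hρj hj⟩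
          rw [hset, Finset.card_sdiff_of_subset (by rw [Finset.range_subset_range]; exact hρ_le i)]
          simp
        rw [Finset.sum_congr rfl (fun i _ => hrow i)]
        have hadd : ∑ i ∈ range (K+1), (t i - ρ i) + ∑ i ∈ range (K+1), ρ i
            = ∑ i ∈ range (K+1), t i := by
          rw [← Finset.sum_add_distrib]
          exact Finset.sum_congr rfl fun i _ => by have := hρ_le i; omega
        have h6 := hsum (K+1)
        have h7 : t (K+1) = 0 := ht0 (K+1) (by omega)
        have h8 : ∑ i ∈ range (K+1), ρ i = ∑ i ∈ range K, ρ i := by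
          rw [Finset.sum_range_succ, hρ0 K le_rfl, add_zero]
        omega
      · have hrow : ∀ i, (range (t i)).filter (fun j => e i j = k)
            = (range (ρ i)).filter (fun j => e' i j = k) := by
          intro i
          ext j
          simp only [mem_filter, mem_range]
          constructor
          · rintro ⟨hj, hjk⟩
            by_cases h1 : j < ρ i
            · rw [heval1 i j h1] at hjk
              exact ⟨h1, hjk⟩
            · rw [heval2 i j h1 hj] at hjk
              exact absurd hjk.symm hk
          · rintro ⟨hj, hjk⟩
            exact ⟨lt_of_lt_of_le hj (hρ_le i), by rw [heval1 i j hj]; exact hjk⟩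
        rw [Finset.sum_congr rfl (fun i _ => by rw [hrow i])]
        rw [Finset.sum_range_succ, hρ0 K le_rfl]
        simp only [Finset.range_zero, Finset.filter_empty, Finset.card_empty, add_zero]
        rw [hcont' k]
        simp only [hc'def]
        by_cases h1 : k < K
        · rw [if_pos h1]
        · rw [if_neg h1]
          exact (hc0 k (by omega)).symm


/-- The Kostka number `K_{μξ}`: the number of semistandard Young tableaux of shape `μ`
and content `ξ` (i.e. the value `k` occurs `ξ k` times, for each `k`). -/
noncomputable def Kostka (n : ℕ) (μ ξ : Fin n → ℕ) : ℕ :=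
  Nat.card {T : SSYT (extendTuple n μ) // ∀ k : ℕ, contentCount T k = extendTuple n ξ k}

/-- Dominance order on `n`-tuples: `ξ ⊴ μ` iff `|ξ| = |μ|` and all partial sums of `ξ`
are at most the corresponding partial sums of `μ`. -/
def Dominates (n : ℕ) (ξ μ : Fin n → ℕ) : Prop :=
  (∑ i, ξ i) = (∑ i, μ i) ∧
  ∀ k : ℕ, ∑ i ∈ Finset.range k, extendTuple n ξ i ≤ ∑ i ∈ Finset.range k, extendTuple n μ i

/-- For partitions `μ`, `ξ` with at most `n` parts, the Kostka number
`K_{μξ}` is nonzero iff `ξ ⊴ μ` in the dominance order, i.e. iff `|ξ| = |μ|` and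
`ξ 1 + ⋯ + ξ i ≤ μ 1 + ⋯ + μ i` for every `i`. -/
theorem kostka_ne_zero_iff_dominates (n : ℕ) (hn : 1 ≤ n) (μ ξ : Fin n → ℕ)
    (hμ : Antitone μ) (hξ : Antitone ξ) :
    Kostka n μ ξ ≠ 0 ↔ Dominates n ξ μ := by
  classical
  set s := extendTuple n μ with hs_def
  set c := extendTuple n ξ with hc_def
  have hs : Antitone s := extendTuple_antitone hμ
  have hc : Antitone c := extendTuple_antitone hξ
  have hs0 : ∀ i, n ≤ i → s i = 0 := fun i h => extendTuple_zero μ h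
  have hc0 : ∀ i, n ≤ i → c i = 0 := fun i h => extendTuple_zero ξ h
  have hbridge : ∀ T : SSYT s, ∀ k, contentCount T k
      = ∑ i ∈ range n, ((range (s i)).filter (fun j => T.entry i j = k)).card :=
    fun T k => contentCount_eq_sum hs hs0 T k
  have hlt : ∀ T : SSYT s, (∀ k, contentCount T k = c k) → ∀ i j, j < s i →
      T.entry i j < n := by
    intro T hT i j hj
    by_contra hcon
    push_neg at hcon
    have h0 : contentCount T (T.entry i j) = 0 := by rw [hT]; exact hc0 _ hcon
    rw [hbridge] at h0
    have hi : i ∈ range n := Finset.mem_range.mpr (by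
      by_contra hin; push_neg at hin; rw [hs0 i hin] at hj; omega)
    have h1 := Finset.sum_eq_zero_iff.mp h0 i hi
    rw [Finset.card_eq_zero] at h1
    have hjmem : j ∈ (range (s i)).filter (fun j' => T.entry i j' = T.entry i j) := by
      simp [Finset.mem_range, hj]
    rw [h1] at hjmem
    exact absurd hjmem (Finset.notMem_empty j)
  have hfin : Finite {T : SSYT s // ∀ k : ℕ, contentCount T k = c k} := by
    have hinj : Function.Injective
        (fun T : {T : SSYT s // ∀ k : ℕ, contentCount T k = c k} =>
          (fun (i : Fin n) (j : Fin (s 0)) =>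
            (⟨min (T.1.entry i j) n, by omega⟩ : Fin (n+1)))) := by
      intro T1 T2 h12
      have hent : T1.1.entry = T2.1.entry := by
        funext i j
        by_cases hd : j < s i
        · have hin : i < n := by
            by_contra hcon; push_neg at hcon; rw [hs0 i hcon] at hd; omega
          have hjn : j < s 0 := lt_of_lt_of_le hd (hs (Nat.zero_le i))
          have hval := congrFun (congrFun h12 ⟨i, hin⟩) ⟨j, hjn⟩
          simp only [Fin.mk.injEq] at hval
          have h1 := hlt T1.1 T1.2 i j hd
          have h2 := hlt T2.1 T2.2 i j hd
          omega
        · rw [T1.1.zeros i j hd, T2.1.zeros i j hd]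
      exact Subtype.ext (SSYT.ext' hent)
    exact Finite.of_injective _ hinj
  have hKeq : Kostka n μ ξ
      = Nat.card {T : SSYT s // ∀ k : ℕ, contentCount T k = c k} := rfl
  rw [hKeq, Nat.card_ne_zero]
  constructor
  · rintro ⟨⟨⟨T, hT⟩⟩, -⟩
    refine ⟨?_, ?_⟩
    · have h2 : ∑ v ∈ range n, c v = ∑ v ∈ range n, contentCount T v :=
        Finset.sum_congr rfl fun v _ => (hT v).symm
      have h3 : ∑ v ∈ range n, contentCount T v = ∑ i ∈ range n, s i := by
        rw [Finset.sum_congr rfl (fun v _ => hbridge T v), Finset.sum_comm]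
        refine Finset.sum_congr rfl fun i _ => ?_
        rw [sum_card_filter_lt (range (s i)) (fun j => T.entry i j) n,
          Finset.filter_true_of_mem
            (fun j hj => hlt T hT i j (Finset.mem_range.mp hj)),
          Finset.card_range]
      have h1 : ∑ i, ξ i = ∑ v ∈ range n, c v := (sum_extendTuple ξ).symm
      have h4 : ∑ i ∈ range n, s i = ∑ i, μ i := sum_extendTuple μ
      exact h1.trans (h2.trans (h3.trans h4))
    · intro k
      calc ∑ i ∈ range k, c i
          = ∑ v ∈ range k, contentCount T v :=
            Finset.sum_congr rfl fun v _ => (hT v).symm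
        _ = ∑ i ∈ range n, ((range (s i)).filter (fun j => T.entry i j < k)).card := by
            rw [Finset.sum_congr rfl (fun v _ => hbridge T v), Finset.sum_comm]
            exact Finset.sum_congr rfl fun i _ =>
              sum_card_filter_lt (range (s i)) (fun j => T.entry i j) k
        _ ≤ ∑ i ∈ range n, (if i < k then s i else 0) := by
            refine Finset.sum_le_sum fun i _ => ?_
            by_cases hik : i < k
            · rw [if_pos hik]
              exact le_trans (Finset.card_filter_le _ _) (le_of_eq (Finset.card_range _))
            · rw [if_neg hik]
              have hempty : (range (s i)).filter (fun j => T.entry i j < k) = ∅ := by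
                rw [Finset.filter_eq_empty_iff]
                intro j hj
                have := entry_ge_row hs T i j (Finset.mem_range.mp hj)
                omega
              rw [hempty, Finset.card_empty]
        _ ≤ ∑ i ∈ range k, s i := by
            rw [← Finset.sum_filter]
            refine Finset.sum_le_sum_of_subset fun x hx => ?_
            simp only [Finset.mem_filter, Finset.mem_range] at hx ⊢
            omega
  · intro hD
    obtain ⟨htotd, hdomd⟩ := hD
    refine ⟨?_, hfin⟩
    have htot' : ∑ i ∈ range n, c i = ∑ i ∈ range n, s i :=
      ((sum_extendTuple ξ).trans htotd).trans (sum_extendTuple μ).symm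
    obtain ⟨e, hw, hcs, hz, hb, hcont⟩ := exists_filling n s c hs hc hs0 hc0 hdomd htot'
    refine ⟨⟨⟨e, hw, hcs, hz⟩, fun k => ?_⟩⟩
    rw [hbridge]
    exact hcont k
end

section
/- Let ξ ⊴ μ be partitions with ξ having exactly k nonzero parts (ξ_k > 0) and μ having m parts, and suppose k ≥ 2. Let r be an index with μ_{r+1} < ξ_k ≤ μ_r (where μ_{m+1} = 0). Define the tuple μ' = (μ_1, …, μ_{r−1}, μ_r − (ξ_k − μ_{r+1}), μ_{r+2}, …, μ_m) obtained by removing ξ_k boxes from the Young diagram of μ as described (filling rows m, m−1, …, r from the bottom, right to left), and let ξ' = (ξ_1, …, ξ_{k−1}). Then ξ' ⊴ μ', i.e., |ξ'| = |μ'| and ξ'_1 + ⋯ + ξ'_i ≤ μ'_1 + ⋯ + μ'_i for all i ≥ 1. -/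
open scoped BigOperators

/-- Dominance order for finitely supported tuples of natural numbers indexed by `ℕ`
(0-indexed): `ξ ⊴ μ` iff the contents agree (all sufficiently long partial sums are
equal) and every partial sum of `ξ` is at most the corresponding partial sum of `μ`. -/
def DominatesFun (ξ μ : ℕ → ℕ) : Prop :=
  (∃ N : ℕ, ∀ j : ℕ, N ≤ j →
      ∑ i ∈ Finset.range j, ξ i = ∑ i ∈ Finset.range j, μ i) ∧
  ∀ j : ℕ, ∑ i ∈ Finset.range j, ξ i ≤ ∑ i ∈ Finset.range j, μ i

/-- Let `ξ ⊴ μ` be partitions (written 0-indexed, so the `i`-th part of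
the text is `ξ (i-1)`), where `ξ` has exactly `k` nonzero parts (`k ≥ 2`), `μ` has (at
most) `m` parts, and let `r` (0-indexed; the text's row `r+1`) satisfy
`μ (r+1) < ξ (k-1) ≤ μ r`.  Removing the `ξ (k-1)` boxes filled with the letter `k` from
the bottom of `μ` leaves the diagram
`μ' = (μ 0, …, μ (r-1), μ r - (ξ (k-1) - μ (r+1)), μ (r+2), …, μ (m-1))`,
and with `ξ' = (ξ 0, …, ξ (k-2))` we have `ξ' ⊴ μ'`. -/
theorem dominance_inductive_step (μ ξ : ℕ → ℕ) (hμ : Antitone μ) (hξ : Antitone ξ)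
    (m k : ℕ) (hk : 2 ≤ k)
    (hμm : ∀ i, m ≤ i → μ i = 0)
    (hξk : ∀ i, k ≤ i → ξ i = 0) (hξpos : 0 < ξ (k - 1))
    (hdom : DominatesFun ξ μ)
    (r : ℕ) (hrm : r < m) (hr1 : μ (r + 1) < ξ (k - 1)) (hr2 : ξ (k - 1) ≤ μ r) :
    DominatesFun
      (fun i => if i + 1 < k then ξ i else 0)
      (fun i => if i < r then μ i
        else if i = r then μ r - (ξ (k - 1) - μ (r + 1))
        else μ (i + 1)) := by
  obtain ⟨⟨N, hN⟩, hle⟩ := hdom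
  set ξ' : ℕ → ℕ := fun i => if i + 1 < k then ξ i else 0 with hξ'
  set μ' : ℕ → ℕ := fun i => if i < r then μ i
        else if i = r then μ r - (ξ (k - 1) - μ (r + 1))
        else μ (i + 1) with hμ'
  -- partial sums of ξ'
  have hSξlow : ∀ j, j ≤ k - 1 →
      ∑ i ∈ Finset.range j, ξ' i = ∑ i ∈ Finset.range j, ξ i := by
    intro j hj
    refine Finset.sum_congr rfl ?_
    intro i hi
    simp only [Finset.mem_range] at hi
    have : i + 1 < k := by omega
    simp [hξ', this]
  have hSξhigh : ∀ j, k - 1 ≤ j →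
      ∑ i ∈ Finset.range j, ξ' i = ∑ i ∈ Finset.range (k - 1), ξ i := by
    intro j hj
    rw [← hSξlow (k - 1) le_rfl]
    symm
    refine Finset.sum_subset (Finset.range_subset_range.mpr hj) ?_
    intro i _ hi
    simp only [Finset.mem_range, not_lt] at hi
    have : ¬ (i + 1 < k) := by omega
    simp [hξ', this]
  -- plateau of ξ
  have hξplat : ∀ j, k ≤ j → ∑ i ∈ Finset.range j, ξ i = ∑ i ∈ Finset.range k, ξ i := by
    intro j hj
    symm
    refine Finset.sum_subset (Finset.range_subset_range.mpr hj) ?_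
    intro i _ hi
    simp only [Finset.mem_range, not_lt] at hi
    exact hξk i hi
  have hξsplit : ∑ i ∈ Finset.range k, ξ i
      = ∑ i ∈ Finset.range (k - 1), ξ i + ξ (k - 1) := by
    have h : k = (k - 1) + 1 := by omega
    conv_lhs => rw [h]
    exact Finset.sum_range_succ _ _
  -- partial sums of μ'
  have hSμlow : ∀ j, j ≤ r →
      ∑ i ∈ Finset.range j, μ' i = ∑ i ∈ Finset.range j, μ i := by
    intro j hj
    refine Finset.sum_congr rfl ?_
    intro i hi
    simp only [Finset.mem_range] at hi
    have : i < r := by omega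
    simp [hμ', this]
  have hSμhigh : ∀ j, r + 1 ≤ j →
      ∑ i ∈ Finset.range j, μ' i + ξ (k - 1) = ∑ i ∈ Finset.range (j + 1), μ i := by
    intro j hj
    induction j, hj using Nat.le_induction with
    | base =>
      show ∑ i ∈ Finset.range (r + 1), μ' i + ξ (k - 1) = ∑ i ∈ Finset.range (r + 2), μ i
      have e1 : ∑ i ∈ Finset.range (r + 1), μ' i
          = ∑ i ∈ Finset.range r, μ' i + μ' r := Finset.sum_range_succ _ _
      have e2 : ∑ i ∈ Finset.range (r + 2), μ i
          = ∑ i ∈ Finset.range r, μ i + μ r + μ (r + 1) := by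
        rw [show r + 2 = (r + 1) + 1 from rfl, Finset.sum_range_succ, Finset.sum_range_succ]
      have e3 : μ' r = μ r - (ξ (k - 1) - μ (r + 1)) := by simp [hμ']
      have e4 := hSμlow r le_rfl
      omega
    | succ j hj ih =>
      show ∑ i ∈ Finset.range (j + 1), μ' i + ξ (k - 1) = ∑ i ∈ Finset.range (j + 2), μ i
      have e1 : ∑ i ∈ Finset.range (j + 1), μ' i
          = ∑ i ∈ Finset.range j, μ' i + μ' j := Finset.sum_range_succ _ _
      have e2 : ∑ i ∈ Finset.range (j + 2), μ i
          = ∑ i ∈ Finset.range (j + 1), μ i + μ (j + 1) := Finset.sum_range_succ _ _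
      have e3 : μ' j = μ (j + 1) := by
        have h1 : ¬ j < r := by omega
        have h2 : j ≠ r := by omega
        simp [hμ', h1, h2]
      omega
  constructor
  · refine ⟨max (max N k) (r + 1), fun j hj => ?_⟩
    have hjN : N ≤ j + 1 := by omega
    have hjk : k ≤ j + 1 := by omega
    have hjk' : k - 1 ≤ j := by omega
    have hjr : r + 1 ≤ j := by omega
    have h1 := hSξhigh j hjk'
    have h2 := hSμhigh j hjr
    have h3 := hN (j + 1) hjN
    have h4 := hξplat (j + 1) hjk
    omega
  · intro j
    rcases le_or_gt j r with hjr | hjr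
    · -- low case
      have h1 : ∑ i ∈ Finset.range j, ξ' i ≤ ∑ i ∈ Finset.range j, ξ i := by
        refine Finset.sum_le_sum ?_
        intro i _
        by_cases h : i + 1 < k <;> simp [hξ', h]
      calc ∑ i ∈ Finset.range j, ξ' i ≤ ∑ i ∈ Finset.range j, ξ i := h1
        _ ≤ ∑ i ∈ Finset.range j, μ i := hle j
        _ = ∑ i ∈ Finset.range j, μ' i := (hSμlow j hjr).symm
    · -- high case : j ≥ r + 1
      have h2 := hSμhigh j hjr
      -- suffices: sum ξ' j + ξ (k-1) ≤ sum μ (j+1)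
      have key : ∑ i ∈ Finset.range j, ξ' i + ξ (k - 1)
          ≤ ∑ i ∈ Finset.range (j + 1), ξ i := by
        rcases le_or_gt j (k - 1) with hjk | hjk
        · rw [hSξlow j hjk]
          have hmono : ξ (k - 1) ≤ ξ j := hξ hjk
          have : ∑ i ∈ Finset.range (j + 1), ξ i
              = ∑ i ∈ Finset.range j, ξ i + ξ j := Finset.sum_range_succ _ _
          omega
        · rw [hSξhigh j (le_of_lt hjk)]
          have hmono : ∑ i ∈ Finset.range k, ξ i ≤ ∑ i ∈ Finset.range (j + 1), ξ i :=
            Finset.sum_le_sum_of_subset (Finset.range_subset_range.mpr (by omega))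
          omega
      have h3 := hle (j + 1)
      omega
end

section
/- (Steinberg's formula, type A) Let n ≥ 1 and let λ, μ, ν be partitions with at most n parts with |ν| = |λ| + |μ|. Then the Littlewood–Richardson coefficient satisfies c_{λμ}^{ν} = Σ_{σ, τ ∈ S_n} (−1)^{σ}(−1)^{τ} 𝔓(σ(λ + ρ) + τ(μ + ρ) − (ν + 2ρ)), where ρ = (n−1, n−2, …, 1, 0) and 𝔓 is the Kostant partition function for the root system A_{n−1}. -/
open scoped BigOperators

open MvPolynomial in
/-- The alternant `det (x_i ^ (w j + n - j))` (with 0-indexed `j`, so the exponent is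
`w j + (n - 1 - j)`), i.e. the numerator of the bialternant formula for the Schur
polynomial of the tuple `w`. -/
noncomputable def alternant (n : ℕ) (w : Fin n → ℕ) : MvPolynomial (Fin n) ℤ :=
  Matrix.det (Matrix.of fun i j : Fin n =>
    (X i : MvPolynomial (Fin n) ℤ) ^ (w j + (n - 1 - (j : ℕ))))

/-- The Vandermonde determinant `det (x_i ^ (n - j))`. -/
noncomputable def vandermondePoly (n : ℕ) : MvPolynomial (Fin n) ℤ :=
  alternant n (fun _ => 0)

/-- The Schur polynomial `S_λ = det (x_i ^ (λ j + n - j)) / det (x_i ^ (n - j))`,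
as an element of the fraction field of `ℤ[x 1, …, x n]`. -/
noncomputable def schur (n : ℕ) (lam : Fin n → ℕ) : FractionRing (MvPolynomial (Fin n) ℤ) :=
  algebraMap _ _ (alternant n lam) / algebraMap _ _ (vandermondePoly n)

attribute [local instance] Classical.propDecidable

/-- The (finite) set of partitions with at most `n` parts and content `N`. -/
noncomputable def partitionsOfSize (n N : ℕ) : Finset (Fin n → ℕ) :=
  (Finset.Iic (fun _ => N : Fin n → ℕ)).filter (fun ν => Antitone ν ∧ ∑ i, ν i = N)
/-- The staircase tuple `ρ = (n-1, n-2, …, 1, 0)` (half sum of positive roots of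
`A_{n-1}`, up to the usual shift). -/
def rho (n : ℕ) : Fin n → ℕ := fun j => n - 1 - (j : ℕ)

/-- The Kostant partition function for the root system `A_{n-1}`: `kostant n v` is the
number of ways of writing `v ∈ ℤ^n` as a sum, with non-negative integer multiplicities
`N i j`, of the positive roots `e_i - e_j` (`i < j`). -/
noncomputable def kostant (n : ℕ) (v : Fin n → ℤ) : ℕ :=
  Nat.card {N : Fin n → Fin n → ℕ //
    (∀ i j : Fin n, ¬ i < j → N i j = 0) ∧
    ∀ m : Fin n, (∑ j : Fin n, (N m j : ℤ)) - (∑ i : Fin n, (N i m : ℤ)) = v m}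

open Finset

namespace SteinbergAux
variable {n : ℕ}

def pairs (n : ℕ) : Finset (Fin n × Fin n) := Finset.univ.filter fun p => p.1 < p.2

def root (p : Fin n × Fin n) (m : Fin n) : ℤ :=
  (if p.1 = m then 1 else 0) - (if p.2 = m then 1 else 0)

def sig (S : Finset (Fin n × Fin n)) (m : Fin n) : ℤ := ∑ p ∈ S, root p m

def flow (N : Fin n → Fin n → ℕ) (m : Fin n) : ℤ :=
  (∑ j, (N m j : ℤ)) - ∑ i, (N i m : ℤ)

def Cond (v : Fin n → ℤ) (N : Fin n → Fin n → ℕ) : Prop :=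
  (∀ i j : Fin n, ¬ i < j → N i j = 0) ∧ ∀ m, flow N m = v m

lemma sum_Iic_flow (N : Fin n → Fin n → ℕ) (hN : ∀ i j : Fin n, ¬ i < j → N i j = 0)
    (a : Fin n) :
    ∑ m ∈ Iic a, flow N m
      = ∑ p ∈ univ.filter (fun p : Fin n × Fin n => p.1 ≤ a ∧ a < p.2), (N p.1 p.2 : ℤ) := by
  have h1 : ∑ m ∈ Iic a, flow N m
      = (∑ p ∈ (Iic a) ×ˢ (univ : Finset (Fin n)), (N p.1 p.2 : ℤ))
        - ∑ p ∈ (Iic a) ×ˢ (univ : Finset (Fin n)), (N p.2 p.1 : ℤ) := by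
    rw [Finset.sum_product, Finset.sum_product, ← Finset.sum_sub_distrib]
    rfl
  have h2 : ∑ p ∈ (Iic a) ×ˢ (univ : Finset (Fin n)), (N p.2 p.1 : ℤ)
      = ∑ p ∈ ((Iic a) ×ˢ (univ : Finset (Fin n))).filter (fun p => p.2 ≤ a),
          (N p.2 p.1 : ℤ) := by
    rw [← Finset.sum_filter_add_sum_filter_not ((Iic a) ×ˢ (univ : Finset (Fin n)))
      (fun p => p.2 ≤ a)]
    have h0 : ∑ p ∈ ((Iic a) ×ˢ (univ : Finset (Fin n))).filter (fun p => ¬ p.2 ≤ a),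
        (N p.2 p.1 : ℤ) = 0 := by
      apply Finset.sum_eq_zero
      intro p hp
      simp only [Finset.mem_filter, Finset.mem_product, Finset.mem_Iic] at hp
      have : ¬ p.2 < p.1 := fun h => hp.2 (le_trans h.le hp.1.1)
      rw [hN _ _ this]; norm_num
    rw [h0, add_zero]
  have h3 : ∑ p ∈ ((Iic a) ×ˢ (univ : Finset (Fin n))).filter (fun p => p.2 ≤ a),
        (N p.2 p.1 : ℤ)
      = ∑ p ∈ ((Iic a) ×ˢ (univ : Finset (Fin n))).filter (fun p => p.2 ≤ a),
        (N p.1 p.2 : ℤ) := by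
    apply Finset.sum_nbij' (fun p => Prod.swap p) (fun p => Prod.swap p) <;>
      simp [Finset.mem_filter, Finset.mem_product, Finset.mem_Iic, and_comm]
  have h4 : ((Iic a) ×ˢ (univ : Finset (Fin n))).filter (fun p => ¬ p.2 ≤ a)
      = univ.filter (fun p : Fin n × Fin n => p.1 ≤ a ∧ a < p.2) := by
    ext p
    simp [Finset.mem_filter, Finset.mem_product, Finset.mem_Iic, not_le]
  rw [h1, h2, h3, ← h4,
    ← Finset.sum_filter_add_sum_filter_not ((Iic a) ×ˢ (univ : Finset (Fin n)))
      (fun p => p.2 ≤ a) (fun p => (N p.1 p.2 : ℤ))]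
  ring

end SteinbergAux

namespace SteinbergAux
variable {n : ℕ}

noncomputable def kostant' (n : ℕ) (v : Fin n → ℤ) : ℕ := Nat.card {N // Cond v N}

lemma sum_Iic_root (p : Fin n × Fin n) (a : Fin n) :
    ∑ m ∈ Iic a, root p m
      = (if p.1 ≤ a then (1:ℤ) else 0) - (if p.2 ≤ a then (1:ℤ) else 0) := by
  unfold root
  rw [Finset.sum_sub_distrib]
  congr 1 <;> (rw [Finset.sum_ite_eq]; simp)

lemma sum_Iic_sig_nonneg {S : Finset (Fin n × Fin n)} (hS : S ⊆ pairs n) (a : Fin n) :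
    0 ≤ ∑ m ∈ Iic a, sig S m := by
  unfold sig
  rw [Finset.sum_comm]
  apply Finset.sum_nonneg
  intro p hp
  rw [sum_Iic_root]
  have hlt : p.1 < p.2 := by
    have := hS hp; simp [pairs] at this; exact this
  by_cases h2 : p.2 ≤ a
  · have : p.1 ≤ a := le_trans hlt.le h2
    simp [h2, this]
  · simp [h2]; split <;> norm_num

lemma sum_Iic_sig_pos {S : Finset (Fin n × Fin n)} (hS : S ⊆ pairs n)
    {p : Fin n × Fin n} (hp : p ∈ S) : 1 ≤ ∑ m ∈ Iic p.1, sig S m := by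
  unfold sig
  rw [Finset.sum_comm]
  have hterm : ∑ m ∈ Iic p.1, root p m = 1 := by
    rw [sum_Iic_root]
    have hlt : p.1 < p.2 := by have := hS hp; simp [pairs] at this; exact this
    simp [le_refl, not_le.mpr hlt]
  calc (1:ℤ) = ∑ m ∈ Iic p.1, root p m := hterm.symm
    _ ≤ ∑ q ∈ S, ∑ m ∈ Iic p.1, root q m := by
        apply Finset.single_le_sum (f := fun q => ∑ m ∈ Iic p.1, root q m) _ hp
        intro q hq
        show (0:ℤ) ≤ ∑ m ∈ Iic p.1, root q m
        rw [sum_Iic_root]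
        have hlt : q.1 < q.2 := by have := hS hq; simp [pairs] at this; exact this
        by_cases h2 : q.2 ≤ p.1
        · have : q.1 ≤ p.1 := le_trans hlt.le h2
          simp [h2, this]
        · simp [h2]; split <;> norm_num

lemma Cond.entry_le {v : Fin n → ℤ} {N : Fin n → Fin n → ℕ} (h : Cond v N)
    {a b : Fin n} (hab : a < b) : (N a b : ℤ) ≤ ∑ m ∈ Iic a, v m := by
  have hflow : ∑ m ∈ Iic a, v m
      = ∑ p ∈ univ.filter (fun p : Fin n × Fin n => p.1 ≤ a ∧ a < p.2), (N p.1 p.2 : ℤ) := by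
    rw [← sum_Iic_flow N h.1 a]
    exact Finset.sum_congr rfl fun m _ => (h.2 m).symm
  rw [hflow]
  have hmem : (a, b) ∈ univ.filter (fun p : Fin n × Fin n => p.1 ≤ a ∧ a < p.2) :=
    Finset.mem_filter.mpr ⟨Finset.mem_univ _, le_refl a, hab⟩
  exact Finset.single_le_sum (f := fun p : Fin n × Fin n => (N p.1 p.2 : ℤ))
    (fun p _ => by positivity) hmem

lemma Cond.le_bound {v : Fin n → ℤ} {N : Fin n → Fin n → ℕ} (h : Cond v N)
    {B : ℕ} (hB : ∀ a : Fin n, ∑ m ∈ Iic a, v m ≤ (B : ℤ)) :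
    N ≤ (fun _ _ => B) := by
  intro a b
  by_cases hab : a < b
  · have := (h.entry_le hab).trans (hB a)
    exact_mod_cast this
  · simp [h.1 a b hab]

lemma kostant'_eq_card {v : Fin n → ℤ} {B : ℕ}
    (hB : ∀ a : Fin n, ∑ m ∈ Iic a, v m ≤ (B : ℤ)) :
    kostant' n v = ((Finset.Iic (fun _ _ => B : Fin n → Fin n → ℕ)).filter (Cond v)).card := by
  rw [kostant', ← Nat.card_eq_finsetCard]
  apply Nat.card_congr
  apply Equiv.subtypeEquivRight
  intro N
  simp only [Finset.mem_filter, Finset.mem_Iic]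
  exact ⟨fun h => ⟨h.le_bound hB, h⟩, fun h => h.2⟩

end SteinbergAux

namespace SteinbergAux
variable {n : ℕ}

lemma kostant'_zero : kostant' n (fun _ => (0:ℤ)) = 1 := by
  have hB : ∀ a : Fin n, ∑ m ∈ Iic a, (fun _ => (0:ℤ)) m ≤ ((0:ℕ) : ℤ) := by simp
  rw [kostant'_eq_card hB]
  have : (Finset.Iic (fun _ _ => 0 : Fin n → Fin n → ℕ)).filter (Cond (fun _ => (0:ℤ)))
      = {fun _ _ => 0} := by
    ext N
    simp only [Finset.mem_filter, Finset.mem_Iic, Finset.mem_singleton]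
    constructor
    · rintro ⟨hle, -⟩
      funext i j
      exact Nat.le_zero.mp (hle i j)
    · rintro rfl
      refine ⟨le_refl _, fun i j _ => rfl, fun m => ?_⟩
      simp [flow]
  rw [this, Finset.card_singleton]

lemma kostant'_neg_sig {S : Finset (Fin n × Fin n)} (hS : S ⊆ pairs n) (hne : S.Nonempty) :
    kostant' n (fun m => 0 - sig S m) = 0 := by
  rw [kostant']
  rw [Nat.card_eq_zero]
  left
  constructor
  rintro ⟨N, hN0, hNflow⟩
  obtain ⟨p, hp⟩ := hne
  have h1 : 1 ≤ ∑ m ∈ Iic p.1, sig S m := sum_Iic_sig_pos hS hp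
  have h2 : 0 ≤ ∑ m ∈ Iic p.1, flow N m := by
    rw [sum_Iic_flow N hN0]
    exact Finset.sum_nonneg fun q _ => by positivity
  have h3 : ∑ m ∈ Iic p.1, flow N m = ∑ m ∈ Iic p.1, (0 - sig S m) :=
    Finset.sum_congr rfl fun m _ => hNflow m
  rw [h3, Finset.sum_sub_distrib] at h2
  simp at h2
  omega

def upd (N : Fin n → Fin n → ℕ) (p : Fin n × Fin n) (d : ℕ) : Fin n → Fin n → ℕ :=
  fun i j => if (i, j) = p then d else N i j

lemma upd_cast (N : Fin n → Fin n → ℕ) (p : Fin n × Fin n) (d : ℕ) (i j : Fin n) :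
    ((upd N p d i j : ℕ) : ℤ)
      = (N i j : ℤ) + ((d : ℤ) - N p.1 p.2) * (if (i, j) = p then 1 else 0) := by
  unfold upd
  by_cases h : (i, j) = p
  · have h1 : i = p.1 := by rw [← h]
    have h2 : j = p.2 := by rw [← h]
    subst h1; subst h2
    simp at h ⊢
  · simp [h]

lemma flow_upd (N : Fin n → Fin n → ℕ) (p : Fin n × Fin n) (d : ℕ) (m : Fin n) :
    flow (upd N p d) m = flow N m + ((d : ℤ) - N p.1 p.2) * root p m := by
  unfold flow root
  simp only [upd_cast]
  rw [Finset.sum_add_distrib, Finset.sum_add_distrib, ← Finset.mul_sum, ← Finset.mul_sum]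
  have e1 : ∑ j : Fin n, (if (m, j) = p then (1:ℤ) else 0) = if p.1 = m then 1 else 0 := by
    by_cases h : p.1 = m
    · subst h
      rw [Finset.sum_eq_single p.2] <;> simp +contextual [Prod.ext_iff, eq_comm]
    · rw [if_neg h]
      apply Finset.sum_eq_zero
      intro j _
      rw [if_neg]
      intro hcon
      exact h (by rw [← hcon])
  have e2 : ∑ i : Fin n, (if (i, m) = p then (1:ℤ) else 0) = if p.2 = m then 1 else 0 := by
    by_cases h : p.2 = m
    · subst h
      rw [Finset.sum_eq_single p.1] <;> simp +contextual [Prod.ext_iff, eq_comm]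
    · rw [if_neg h]
      apply Finset.sum_eq_zero
      intro i _
      rw [if_neg]
      intro hcon
      exact h (by rw [← hcon])
  rw [e1, e2]
  ring

lemma upd_upd (N : Fin n → Fin n → ℕ) (p : Fin n × Fin n) (d d' : ℕ) :
    upd (upd N p d) p d' = upd N p d' := by
  funext i j; unfold upd; by_cases h : (i, j) = p <;> simp [h]

lemma upd_eq_self (N : Fin n → Fin n → ℕ) (p : Fin n × Fin n) :
    upd N p (N p.1 p.2) = N := by
  funext i j; unfold upd
  by_cases h : (i, j) = p
  · have h1 : i = p.1 := by rw [← h]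
    have h2 : j = p.2 := by rw [← h]
    subst h1; subst h2; simp
  · simp [h]

lemma upd_apply_self (N : Fin n → Fin n → ℕ) (p : Fin n × Fin n) (d : ℕ) :
    upd N p d p.1 p.2 = d := by simp [upd]

lemma upd_apply_ne (N : Fin n → Fin n → ℕ) (p q : Fin n × Fin n) (d : ℕ) (h : q ≠ p) :
    upd N p d q.1 q.2 = N q.1 q.2 := by
  unfold upd
  rw [if_neg]
  simpa using h

end SteinbergAux

namespace SteinbergAux
variable {n : ℕ}

lemma mem_pairs {p : Fin n × Fin n} : p ∈ pairs n ↔ p.1 < p.2 := by simp [pairs]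

lemma sig_erase {S : Finset (Fin n × Fin n)} {p : Fin n × Fin n} (hp : p ∈ S) (m : Fin n) :
    sig (S.erase p) m = sig S m - root p m := Finset.sum_erase_eq_sub hp

lemma sig_insert {S : Finset (Fin n × Fin n)} {p : Fin n × Fin n} (hp : p ∉ S) (m : Fin n) :
    sig (insert p S) m = sig S m + root p m := by
  rw [sig, Finset.sum_insert hp]; ring_nf; rfl

lemma cond_erase {w : Fin n → ℤ} {S : Finset (Fin n × Fin n)} {N : Fin n → Fin n → ℕ}
    {p : Fin n × Fin n} (hC : Cond (fun m => w m - sig S m) N) (hp : p ∈ S)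
    (hpp : p ∈ pairs n) :
    Cond (fun m => w m - sig (S.erase p) m) (upd N p (N p.1 p.2 + 1)) := by
  constructor
  · intro i j hij
    have hne : ((i, j) : Fin n × Fin n) ≠ p := by
      intro h
      apply hij
      have h1 : i = p.1 := by rw [← h]
      have h2 : j = p.2 := by rw [← h]
      rw [h1, h2]; exact mem_pairs.mp hpp
    rw [upd, if_neg hne]
    exact hC.1 i j hij
  · intro m
    rw [flow_upd, hC.2 m]
    beta_reduce
    rw [sig_erase hp]
    push_cast
    ring

lemma cond_insert {w : Fin n → ℤ} {S : Finset (Fin n × Fin n)} {N : Fin n → Fin n → ℕ}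
    {p : Fin n × Fin n} (hC : Cond (fun m => w m - sig S m) N) (hp : p ∉ S)
    (hpp : p ∈ pairs n) (hNp : N p.1 p.2 ≠ 0) :
    Cond (fun m => w m - sig (insert p S) m) (upd N p (N p.1 p.2 - 1)) := by
  constructor
  · intro i j hij
    have hne : ((i, j) : Fin n × Fin n) ≠ p := by
      intro h
      apply hij
      have h1 : i = p.1 := by rw [← h]
      have h2 : j = p.2 := by rw [← h]
      rw [h1, h2]; exact mem_pairs.mp hpp
    rw [upd, if_neg hne]
    exact hC.1 i j hij
  · intro m
    rw [flow_upd, hC.2 m]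
    beta_reduce
    rw [sig_insert hp]
    have hcast : ((N p.1 p.2 - 1 : ℕ) : ℤ) = (N p.1 p.2 : ℤ) - 1 := by
      have : 1 ≤ N p.1 p.2 := Nat.one_le_iff_ne_zero.mpr hNp
      push_cast [this]
      ring
    rw [hcast]
    ring

noncomputable def pick (s : Finset (Fin n × Fin n)) (hs : s.Nonempty) : Fin n × Fin n :=
  ofLex ((s.image (toLex : Fin n × Fin n → Lex (Fin n × Fin n))).min'
    (hs.image _))

lemma pick_mem (s : Finset (Fin n × Fin n)) (hs : s.Nonempty) : pick s hs ∈ s := by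
  have h := Finset.min'_mem (s.image (toLex : Fin n × Fin n → Lex (Fin n × Fin n)))
    (hs.image _)
  rw [Finset.mem_image] at h
  obtain ⟨a, ha, hae⟩ := h
  rw [pick, ← hae]
  exact ha

def sel (q : Finset (Fin n × Fin n) × (Fin n → Fin n → ℕ)) : Finset (Fin n × Fin n) :=
  (pairs n).filter fun p => p ∈ q.1 ∨ q.2 p.1 p.2 ≠ 0

noncomputable def gfun (q : Finset (Fin n × Fin n) × (Fin n → Fin n → ℕ)) :
    Finset (Fin n × Fin n) × (Fin n → Fin n → ℕ) :=
  if hs : (sel q).Nonempty then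
    (fun p =>
      if p ∈ q.1 then (q.1.erase p, upd q.2 p (q.2 p.1 p.2 + 1))
      else (insert p q.1, upd q.2 p (q.2 p.1 p.2 - 1))) (pick (sel q) hs)
  else q

end SteinbergAux

namespace SteinbergAux
variable {n : ℕ}

lemma gfun_cases (q : Finset (Fin n × Fin n) × (Fin n → Fin n → ℕ))
    (hs : (sel q).Nonempty) :
    ∃ p, p ∈ sel q ∧
      ((p ∈ q.1 ∧ gfun q = (q.1.erase p, upd q.2 p (q.2 p.1 p.2 + 1))) ∨
       (p ∉ q.1 ∧ gfun q = (insert p q.1, upd q.2 p (q.2 p.1 p.2 - 1)))) := by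
  refine ⟨pick (sel q) hs, pick_mem _ _, ?_⟩
  by_cases h : pick (sel q) hs ∈ q.1
  · left
    exact ⟨h, by rw [gfun, dif_pos hs]; beta_reduce; rw [if_pos h]⟩
  · right
    exact ⟨h, by rw [gfun, dif_pos hs]; beta_reduce; rw [if_neg h]⟩

lemma sel_pair_mem {q : Finset (Fin n × Fin n) × (Fin n → Fin n → ℕ)}
    {p : Fin n × Fin n} (hp : p ∈ sel q) :
    p ∈ pairs n ∧ (p ∈ q.1 ∨ q.2 p.1 p.2 ≠ 0) := Finset.mem_filter.mp hp

lemma sel_gfun (q : Finset (Fin n × Fin n) × (Fin n → Fin n → ℕ))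
    (hs : (sel q).Nonempty) : sel (gfun q) = sel q := by
  obtain ⟨p, hpsel, hcase⟩ := gfun_cases q hs
  rcases hcase with ⟨hpS, hg⟩ | ⟨hpS, hg⟩
  · rw [hg]
    ext r
    simp only [sel, Finset.mem_filter]
    by_cases hr : r = p
    · subst hr
      simp [Finset.mem_erase, upd_apply_self, hpS]
    · simp [Finset.mem_erase, hr, upd_apply_ne q.2 p r _ hr]
  · have hNp : q.2 p.1 p.2 ≠ 0 := (sel_pair_mem hpsel).2.resolve_left hpS
    rw [hg]
    ext r
    simp only [sel, Finset.mem_filter]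
    by_cases hr : r = p
    · subst hr
      simp [Finset.mem_insert, hNp]
    · simp [Finset.mem_insert, hr, upd_apply_ne q.2 p r _ hr]

lemma pick_congr {s t : Finset (Fin n × Fin n)} (h : s = t) (hs : s.Nonempty) :
    pick s hs = pick t (h ▸ hs) := by subst h; rfl

lemma gfun_gfun (q : Finset (Fin n × Fin n) × (Fin n → Fin n → ℕ))
    (hs : (sel q).Nonempty) : gfun (gfun q) = q := by
  have hsel : sel (gfun q) = sel q := sel_gfun q hs
  have hs' : (sel (gfun q)).Nonempty := by rw [hsel]; exact hs
  have hpick : pick (sel (gfun q)) hs' = pick (sel q) hs := by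
    rw [pick_congr hsel hs']
  set p := pick (sel q) hs with hp
  have hpsel : p ∈ sel q := pick_mem _ _
  rw [gfun, dif_pos hs']
  beta_reduce
  rw [hpick]
  by_cases hpS : p ∈ q.1
  · have hg : gfun q = (q.1.erase p, upd q.2 p (q.2 p.1 p.2 + 1)) := by
      rw [gfun, dif_pos hs]; beta_reduce; rw [← hp, if_pos hpS]
    have h1 : p ∉ (gfun q).1 := by rw [hg]; exact Finset.notMem_erase _ _
    rw [if_neg h1, hg]
    refine Prod.ext ?_ ?_
    · show insert p (q.1.erase p) = q.1
      exact Finset.insert_erase hpS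
    · show upd (upd q.2 p (q.2 p.1 p.2 + 1)) p
          (upd q.2 p (q.2 p.1 p.2 + 1) p.1 p.2 - 1) = q.2
      rw [upd_apply_self, Nat.add_sub_cancel, upd_upd, upd_eq_self]
  · have hNp : q.2 p.1 p.2 ≠ 0 := (sel_pair_mem hpsel).2.resolve_left hpS
    have hg : gfun q = (insert p q.1, upd q.2 p (q.2 p.1 p.2 - 1)) := by
      rw [gfun, dif_pos hs]; beta_reduce; rw [← hp, if_neg hpS]
    have h1 : p ∈ (gfun q).1 := by rw [hg]; exact Finset.mem_insert_self _ _
    rw [if_pos h1, hg]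
    refine Prod.ext ?_ ?_
    · show (insert p q.1).erase p = q.1
      exact Finset.erase_insert hpS
    · show upd (upd q.2 p (q.2 p.1 p.2 - 1)) p
          (upd q.2 p (q.2 p.1 p.2 - 1) p.1 p.2 + 1) = q.2
      rw [upd_apply_self, Nat.sub_add_cancel (Nat.one_le_iff_ne_zero.mpr hNp), upd_upd,
        upd_eq_self]

end SteinbergAux

namespace SteinbergAux
variable {n : ℕ}

lemma sel_nonempty' {w : Fin n → ℤ} (hw : w ≠ fun _ => 0)
    {q : Finset (Fin n × Fin n) × (Fin n → Fin n → ℕ)} (hSp : q.1 ⊆ pairs n)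
    (hC : Cond (fun m => w m - sig q.1 m) q.2) : (sel q).Nonempty := by
  rw [sel, Finset.filter_nonempty_iff]
  by_contra hcon
  push_neg at hcon
  apply hw
  funext m
  have hS0 : q.1 = ∅ := by
    apply Finset.eq_empty_of_forall_notMem
    intro p hp
    exact (hcon p (hSp hp)).1 hp
  have hN0 : ∀ i j : Fin n, q.2 i j = 0 := by
    intro i j
    by_cases hij : i < j
    · exact (hcon (i, j) (mem_pairs.mpr hij)).2
    · exact hC.1 i j hij
  have hflow : flow q.2 m = 0 := by simp [flow, hN0]
  have h2 := hC.2 m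
  rw [hflow, hS0] at h2
  simp [sig] at h2
  omega

lemma key (w : Fin n → ℤ) :
    ∑ S ∈ (pairs n).powerset, (-1:ℤ)^S.card * kostant' n (fun m => w m - sig S m)
      = if w = (fun _ => 0) then 1 else 0 := by
  by_cases hw : w = fun _ => 0
  · rw [if_pos hw]
    rw [Finset.sum_eq_single ∅]
    · have h0 : (fun m => w m - sig ∅ m) = (fun _ : Fin n => (0:ℤ)) := by
        funext m
        rw [hw]
        simp [sig]
      rw [h0, kostant'_zero]
      simp
    · intro S hS hSne
      have h0 : (fun m => w m - sig S m) = (fun m => 0 - sig S m) := by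
        funext m; rw [hw]
      rw [h0, kostant'_neg_sig (Finset.mem_powerset.mp hS)
        (Finset.nonempty_of_ne_empty hSne)]
      simp
    · intro h
      exact absurd (Finset.empty_mem_powerset _) h
  · rw [if_neg hw]
    set B := ∑ m : Fin n, (w m).natAbs with hBdef
    have hBS : ∀ S : Finset (Fin n × Fin n), S ⊆ pairs n → ∀ a : Fin n,
        ∑ m ∈ Iic a, (w m - sig S m) ≤ (B:ℤ) := by
      intro S hS a
      have h1 : ∑ m ∈ Iic a, (w m - sig S m)
          = (∑ m ∈ Iic a, w m) - ∑ m ∈ Iic a, sig S m := Finset.sum_sub_distrib _ _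
      have h2 : (0:ℤ) ≤ ∑ m ∈ Iic a, sig S m := sum_Iic_sig_nonneg hS a
      have h3 : ∑ m ∈ Iic a, w m ≤ ∑ m ∈ Iic a, |w m| :=
        Finset.sum_le_sum fun m _ => le_abs_self _
      have h4 : ∑ m ∈ Iic a, |w m| ≤ ∑ m : Fin n, |w m| :=
        Finset.sum_le_sum_of_subset_of_nonneg (Finset.subset_univ _)
          (fun m _ _ => abs_nonneg _)
      have h5 : ((B:ℕ):ℤ) = ∑ m : Fin n, |w m| := by
        rw [hBdef]
        push_cast
        exact Finset.sum_congr rfl fun m _ => rfl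
      omega
    have hrw : ∀ S ∈ (pairs n).powerset,
        (-1:ℤ)^S.card * kostant' n (fun m => w m - sig S m)
          = ∑ _N ∈ (Finset.Iic (fun _ _ => B : Fin n → Fin n → ℕ)).filter
              (Cond (fun m => w m - sig S m)), (-1:ℤ)^S.card := by
      intro S hS
      rw [kostant'_eq_card (hBS S (Finset.mem_powerset.mp hS)), Finset.sum_const,
        nsmul_eq_mul, mul_comm]
    rw [Finset.sum_congr rfl hrw]
    have hsum : ∑ S ∈ (pairs n).powerset,
        ∑ _N ∈ (Finset.Iic (fun _ _ => B : Fin n → Fin n → ℕ)).filter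
          (Cond (fun m => w m - sig S m)), (-1:ℤ)^S.card
        = ∑ q ∈ (((pairs n).powerset ×ˢ Finset.Iic (fun _ _ => B : Fin n → Fin n → ℕ)).filter
            (fun q => Cond (fun m => w m - sig q.1 m) q.2)), (-1:ℤ)^q.1.card := by
      rw [Finset.sum_filter, Finset.sum_product]
      apply Finset.sum_congr rfl
      intro S _
      rw [Finset.sum_filter]
    rw [hsum]
    -- the sign-reversing involution
    refine Finset.sum_involution (fun q _ => gfun q) ?_ ?_ ?hmem ?_
    case hmem =>
      intro q hq
      beta_reduce
      rw [Finset.mem_filter, Finset.mem_product] at hq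
      obtain ⟨⟨hS, hN⟩, hC⟩ := hq
      have hSp : q.1 ⊆ pairs n := Finset.mem_powerset.mp hS
      have hsne : (sel q).Nonempty := sel_nonempty' hw hSp hC
      obtain ⟨p, hpsel, hcase⟩ := gfun_cases q hsne
      have hpp : p ∈ pairs n := (sel_pair_mem hpsel).1
      rw [Finset.mem_filter, Finset.mem_product]
      rcases hcase with ⟨hpS, hg⟩ | ⟨hpS, hg⟩
      · have hC' : Cond (fun m => w m - sig (q.1.erase p) m)
            (upd q.2 p (q.2 p.1 p.2 + 1)) := cond_erase hC hpS hpp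
        have hsub : q.1.erase p ⊆ pairs n := (Finset.erase_subset _ _).trans hSp
        refine ⟨⟨?_, ?_⟩, ?_⟩
        · rw [hg]; exact Finset.mem_powerset.mpr hsub
        · rw [hg]
          exact Finset.mem_Iic.mpr (hC'.le_bound (hBS _ hsub))
        · rw [hg]; exact hC'
      · have hNp : q.2 p.1 p.2 ≠ 0 := (sel_pair_mem hpsel).2.resolve_left hpS
        have hC' : Cond (fun m => w m - sig (insert p q.1) m)
            (upd q.2 p (q.2 p.1 p.2 - 1)) := cond_insert hC hpS hpp hNp
        have hsub : insert p q.1 ⊆ pairs n := Finset.insert_subset hpp hSp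
        refine ⟨⟨?_, ?_⟩, ?_⟩
        · rw [hg]; exact Finset.mem_powerset.mpr hsub
        · rw [hg]
          exact Finset.mem_Iic.mpr (hC'.le_bound (hBS _ hsub))
        · rw [hg]; exact hC'
    · intro q hq
      beta_reduce
      rw [Finset.mem_filter, Finset.mem_product] at hq
      obtain ⟨⟨hS, hN⟩, hC⟩ := hq
      have hSp : q.1 ⊆ pairs n := Finset.mem_powerset.mp hS
      have hsne : (sel q).Nonempty := sel_nonempty' hw hSp hC
      obtain ⟨p, hpsel, hcase⟩ := gfun_cases q hsne
      rcases hcase with ⟨hpS, hg⟩ | ⟨hpS, hg⟩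
      · rw [hg]
        show (-1:ℤ)^q.1.card + (-1:ℤ)^(q.1.erase p).card = 0
        rw [← Finset.card_erase_add_one hpS, pow_succ]
        ring
      · rw [hg]
        show (-1:ℤ)^q.1.card + (-1:ℤ)^(insert p q.1).card = 0
        rw [Finset.card_insert_of_notMem hpS, pow_succ]
        ring
    · intro q hq _
      beta_reduce
      rw [Finset.mem_filter, Finset.mem_product] at hq
      obtain ⟨⟨hS, hN⟩, hC⟩ := hq
      have hSp : q.1 ⊆ pairs n := Finset.mem_powerset.mp hS
      have hsne : (sel q).Nonempty := sel_nonempty' hw hSp hC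
      obtain ⟨p, hpsel, hcase⟩ := gfun_cases q hsne
      intro hcon
      have h' : (gfun q).1 = q.1 := congrArg Prod.fst hcon
      rcases hcase with ⟨hpS, hg⟩ | ⟨hpS, hg⟩
      · rw [hg] at h'
        exact (Finset.erase_eq_self.mp h') hpS
      · rw [hg] at h'
        exact hpS (Finset.insert_eq_self.mp h')
    · intro q hq
      beta_reduce
      rw [Finset.mem_filter, Finset.mem_product] at hq
      obtain ⟨⟨hS, hN⟩, hC⟩ := hq
      exact gfun_gfun q (sel_nonempty' hw (Finset.mem_powerset.mp hS) hC)

end SteinbergAux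


namespace SteinbergAux
open MvPolynomial Finset
variable {n : ℕ}

lemma kostant'_eq (v : Fin n → ℤ) : kostant' n v = kostant n v := rfl

lemma key2 (w : Fin n → ℤ) :
    ∑ S ∈ (pairs n).powerset, (-1:ℤ)^S.card * kostant n (fun m => w m - sig S m)
      = if w = (fun _ => 0) then 1 else 0 := by
  simp only [← kostant'_eq]
  exact key w

noncomputable def phi (n : ℕ) (t : Fin n → ℤ) : MvPolynomial (Fin n) ℤ →+ ℤ :=
  (Finsupp.liftAddHom fun (u : Fin n →₀ ℕ) =>
    AddMonoidHom.mulRight ((kostant n (fun m => t m + (u m : ℤ)) : ℤ)) : ((Fin n →₀ ℕ) →₀ ℤ) →+ ℤ).comp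
    (AddMonoidAlgebra.coeffAddEquiv (R := ℤ) (M := Fin n →₀ ℕ)).toAddMonoidHom

lemma phi_monomial (t : Fin n → ℤ) (u : Fin n →₀ ℕ) (r : ℤ) :
    phi n t (monomial u r) = r * kostant n (fun m => t m + (u m : ℤ)) := by
  rw [phi, ← single_eq_monomial]
  exact Finsupp.liftAddHom_apply_single (M := ℤ) _ _ _

end SteinbergAux

namespace SteinbergAux
open MvPolynomial
variable {n : ℕ}

noncomputable def expF (n : ℕ) (w : Fin n → ℕ) (σ : Equiv.Perm (Fin n)) : Fin n →₀ ℕ :=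
  Finsupp.equivFunOnFinite.symm (fun j => w (σ j) + rho n (σ j))

lemma expF_apply (w : Fin n → ℕ) (σ : Equiv.Perm (Fin n)) (j : Fin n) :
    expF n w σ j = w (σ j) + rho n (σ j) := rfl

lemma prod_monomial {ι : Type*} (s : Finset ι) (f : ι → (Fin n →₀ ℕ)) :
    (∏ i ∈ s, (monomial (f i) (1:ℤ) : MvPolynomial (Fin n) ℤ))
      = monomial (∑ i ∈ s, f i) 1 := by
  classical
  induction s using Finset.cons_induction with
  | empty => simp
  | cons a s ha ih => rw [Finset.prod_cons, Finset.sum_cons, ih, monomial_mul, one_mul]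

lemma sum_single_perm (π : Equiv.Perm (Fin n)) (e : Fin n → ℕ) :
    ∑ i : Fin n, Finsupp.single (π i) (e i)
      = Finsupp.equivFunOnFinite.symm (fun j => e (π.symm j)) := by
  ext j
  rw [Finset.sum_apply']
  rw [Finset.sum_eq_single (π.symm j)]
  · simp [Finsupp.single_apply]
  · intro i _ hne
    rw [Finsupp.single_apply, if_neg]
    intro h
    apply hne
    rw [← h]
    simp
  · simp

lemma alternant_expand (n : ℕ) (w : Fin n → ℕ) :
    alternant n w = ∑ σ : Equiv.Perm (Fin n),
      monomial (expF n w σ) ((Equiv.Perm.sign σ : ℤ)) := by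
  rw [alternant, Matrix.det_apply]
  rw [← Equiv.sum_comp (Equiv.inv (Equiv.Perm (Fin n)))
    (fun σ => Equiv.Perm.sign σ • ∏ i, (Matrix.of fun i j : Fin n =>
      (X i : MvPolynomial (Fin n) ℤ) ^ (w j + (n - 1 - (j : ℕ)))) (σ i) i)]
  apply Finset.sum_congr rfl
  intro σ _
  simp only [Equiv.inv_apply, Matrix.of_apply]
  rw [Equiv.Perm.sign_inv]
  have hprod : (∏ i : Fin n, (X (σ⁻¹ i) : MvPolynomial (Fin n) ℤ) ^ (w i + (n - 1 - (i : ℕ))))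
      = monomial (expF n w σ) 1 := by
    calc (∏ i : Fin n, (X (σ⁻¹ i) : MvPolynomial (Fin n) ℤ) ^ (w i + (n - 1 - (i : ℕ))))
        = ∏ i : Fin n, (monomial (Finsupp.single (σ⁻¹ i) (w i + (n - 1 - (i : ℕ)))) (1:ℤ)) := by
          apply Finset.prod_congr rfl
          intro i _
          rw [X_pow_eq_monomial]
      _ = monomial (∑ i : Fin n, Finsupp.single (σ⁻¹ i) (w i + (n - 1 - (i : ℕ)))) 1 :=
          prod_monomial _ _
      _ = monomial (expF n w σ) 1 := by
          rw [sum_single_perm σ⁻¹ (fun i => w i + (n - 1 - (i : ℕ)))]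
          rfl
  rw [hprod]
  rw [smul_monomial]
  congr 1
  simp [Units.smul_def]

end SteinbergAux

namespace SteinbergAux
open MvPolynomial Finset
variable {n : ℕ}

@[to_additive sum_pairs_eq]
lemma prod_pairs_eq {M : Type*} [CommMonoid M] (f : Fin n → Fin n → M) :
    ∏ p ∈ pairs n, f p.1 p.2 = ∏ i : Fin n, ∏ j ∈ Ioi i, f i j := by
  classical
  rw [Finset.prod_sigma']
  apply Finset.prod_nbij' (fun p => (⟨p.1, p.2⟩ : Σ _ : Fin n, Fin n)) (fun x => (x.1, x.2))
  · intro p hp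
    simp only [Finset.mem_sigma, Finset.mem_univ, true_and, Finset.mem_Ioi]
    simpa [pairs] using hp
  · intro x hx
    simp only [Finset.mem_sigma, Finset.mem_univ, true_and, Finset.mem_Ioi] at hx
    simp [pairs, hx]
  · intro p _; rfl
  · intro x _; rfl
  · intro p _; rfl

lemma vander_prod : vandermondePoly n = ∏ p ∈ pairs n, (X p.1 - X p.2 : MvPolynomial (Fin n) ℤ) := by
  have hM : (Matrix.of fun i j : Fin n =>
        (X i : MvPolynomial (Fin n) ℤ) ^ ((fun _ : Fin n => 0) j + (n - 1 - (j : ℕ))))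
      = (Matrix.vandermonde (fun i => (X (Fin.rev i) : MvPolynomial (Fin n) ℤ))).submatrix
          Fin.revPerm Fin.revPerm := by
    apply Matrix.ext
    intro i j
    simp only [Matrix.of_apply, Matrix.submatrix_apply, Matrix.vandermonde]
    have h1 : (Fin.revPerm i).rev = i := by simp [Fin.rev_rev]
    rw [h1]
    have h2 : ((Fin.revPerm j : Fin n) : ℕ) = 0 + (n - 1 - (j : ℕ)) := by
      show ((Fin.rev j : Fin n) : ℕ) = 0 + (n - 1 - (j : ℕ))
      rw [Fin.val_rev]
      omega
    rw [h2]
  rw [vandermondePoly, alternant, hM, Matrix.det_submatrix_equiv_self,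
    Matrix.det_vandermonde]
  rw [← prod_pairs_eq (fun i j => (X (Fin.rev j) - X (Fin.rev i) : MvPolynomial (Fin n) ℤ))]
  apply Finset.prod_nbij' (fun p : Fin n × Fin n => (Fin.rev p.2, Fin.rev p.1))
    (fun p : Fin n × Fin n => (Fin.rev p.2, Fin.rev p.1))
  · intro p hp
    simp only [pairs, Finset.mem_filter, Finset.mem_univ, true_and] at hp ⊢
    exact Fin.rev_lt_rev.mpr hp
  · intro p hp
    simp only [pairs, Finset.mem_filter, Finset.mem_univ, true_and] at hp ⊢
    exact Fin.rev_lt_rev.mpr hp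
  · intro p _
    simp [Fin.rev_rev]
  · intro p _
    simp [Fin.rev_rev]
  · intro p _
    rfl

end SteinbergAux

namespace SteinbergAux
open MvPolynomial Finset
variable {n : ℕ}

noncomputable def mS (n : ℕ) (S : Finset (Fin n × Fin n)) : Fin n →₀ ℕ :=
  (∑ p ∈ pairs n \ S, Finsupp.single p.1 1) + ∑ p ∈ S, Finsupp.single p.2 1

lemma X_eq_monomial (s : Fin n) :
    (X s : MvPolynomial (Fin n) ℤ) = monomial (Finsupp.single s 1) 1 := by
  rw [← pow_one (X s : MvPolynomial (Fin n) ℤ), X_pow_eq_monomial]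

lemma vander_expand :
    vandermondePoly n
      = ∑ S ∈ (pairs n).powerset, monomial (mS n S) ((-1:ℤ)^S.card) := by
  classical
  rw [vander_prod, Finset.prod_sub]
  apply Finset.sum_congr rfl
  intro S hS
  have h1 : (∏ p ∈ pairs n \ S, (X p.1 : MvPolynomial (Fin n) ℤ))
      = monomial (∑ p ∈ pairs n \ S, Finsupp.single p.1 1) 1 := by
    rw [← prod_monomial]
    exact Finset.prod_congr rfl fun p _ => X_eq_monomial p.1
  have h2 : (∏ p ∈ S, (X p.2 : MvPolynomial (Fin n) ℤ))
      = monomial (∑ p ∈ S, Finsupp.single p.2 1) 1 := by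
    rw [← prod_monomial]
    exact Finset.prod_congr rfl fun p _ => X_eq_monomial p.2
  rw [h1, h2, mS]
  have hc : ((-1 : MvPolynomial (Fin n) ℤ)) ^ S.card = C ((-1:ℤ)^S.card) := by
    rw [map_pow, map_neg, map_one]
  rw [hc, mul_assoc, monomial_mul, C_mul_monomial]
  rw [one_mul, mul_one]

lemma vander_ne_zero (hn : 0 < n) : (vandermondePoly n) ≠ 0 := by
  rw [vander_prod]
  apply Finset.prod_ne_zero_iff.mpr
  intro p hp
  intro hcon
  rw [sub_eq_zero] at hcon
  have := X_injective (R := ℤ) hcon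
  have hlt : p.1 < p.2 := by simpa [pairs] using hp
  exact absurd this (ne_of_lt hlt)

lemma sum_ind_pairs (m : Fin n) :
    ∑ p ∈ pairs n, (if p.1 = m then (1:ℤ) else 0) = (rho n m : ℤ) := by
  classical
  rw [sum_pairs_eq (fun i j => if i = m then (1:ℤ) else 0)]
  have h1 : ∀ i : Fin n, ∑ _j ∈ Ioi i, (if i = m then (1:ℤ) else 0)
      = (Ioi i).card • (if i = m then (1:ℤ) else 0) := fun i => Finset.sum_const _
  rw [Finset.sum_congr rfl fun i _ => h1 i]
  rw [Finset.sum_eq_single m]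
  · rw [if_pos rfl, Fin.card_Ioi]
    simp [rho]
  · intro i _ hne
    rw [if_neg hne, smul_zero]
  · intro h
    exact absurd (Finset.mem_univ m) h

lemma mS_apply {S : Finset (Fin n × Fin n)} (hS : S ⊆ pairs n) (m : Fin n) :
    ((mS n S m : ℕ) : ℤ) = (rho n m : ℤ) - sig S m := by
  classical
  have hval : mS n S m
      = (∑ p ∈ pairs n \ S, if p.1 = m then 1 else 0)
        + ∑ p ∈ S, if p.2 = m then 1 else 0 := by
    rw [mS, Finsupp.add_apply, Finset.sum_apply', Finset.sum_apply']
    congr 1 <;> exact Finset.sum_congr rfl fun p _ => Finsupp.single_apply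
  rw [hval]
  push_cast
  have hsplit : ∑ p ∈ pairs n, (if p.1 = m then (1:ℤ) else 0)
      = (∑ p ∈ pairs n \ S, if p.1 = m then (1:ℤ) else 0)
        + ∑ p ∈ S, if p.1 = m then (1:ℤ) else 0 :=
    (Finset.sum_sdiff hS).symm
  have hrho := sum_ind_pairs (n := n) m
  rw [hsplit] at hrho
  have hsig : sig S m = (∑ p ∈ S, if p.1 = m then (1:ℤ) else 0)
      - ∑ p ∈ S, if p.2 = m then (1:ℤ) else 0 := by
    rw [sig]
    unfold root
    rw [Finset.sum_sub_distrib]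
  rw [hsig]
  have e1 : ∑ p ∈ pairs n \ S, (fun p : Fin n × Fin n => if p.1 = m then (1:ℤ) else 0) p
      = ∑ p ∈ pairs n \ S, if p.1 = m then (1:ℤ) else 0 := rfl
  omega

end SteinbergAux

namespace SteinbergAux
open MvPolynomial Finset
variable {n : ℕ}

lemma rigid {nu nu' : Fin n → ℕ} (hnu : Antitone nu) (hnu' : Antitone nu')
    (κ : Equiv.Perm (Fin n))
    (h : ∀ m, ((nu' (κ m) : ℤ) + rho n (κ m)) = (nu m : ℤ) + rho n m) :
    κ = 1 ∧ nu' = nu := by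
  have hstrict : ∀ (f : Fin n → ℕ), Antitone f →
      StrictAnti (fun m : Fin n => (f m : ℤ) + rho n m) := by
    intro f hf a b hab
    have h1 : f b ≤ f a := hf hab.le
    have h2 : rho n b < rho n a := by
      unfold rho
      have := b.isLt
      have := a.isLt
      have hv : (a : ℕ) < b := hab
      omega
    have h1' : (f b : ℤ) ≤ f a := by exact_mod_cast h1
    have h2' : (rho n b : ℤ) < rho n a := by exact_mod_cast h2
    show (f b : ℤ) + rho n b < (f a : ℤ) + rho n a
    omega
  have hG := hstrict nu hnu
  have hF := hstrict nu' hnu'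
  have hmono : StrictMono (⇑κ) := by
    intro a b hab
    have hGab : (nu b : ℤ) + rho n b < (nu a : ℤ) + rho n a := hG hab
    have : (nu' (κ b) : ℤ) + rho n (κ b) < (nu' (κ a) : ℤ) + rho n (κ a) := by
      rw [h a, h b]; exact hGab
    exact hF.lt_iff_gt.mp this
  have hid : ⇑κ = id := by
    have hwf : WellFoundedLT (Fin n) := inferInstance
    have hri := StrictMono.range_inj (f := ⇑κ) (g := id) hmono strictMono_id
    apply hri.mp
    rw [Set.range_id]
    exact κ.surjective.range_eq
  have hκ : κ = 1 := Equiv.ext fun x => congrFun hid x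
  refine ⟨hκ, ?_⟩
  funext m
  have := h m
  rw [hκ] at this
  simp only [Equiv.Perm.one_apply] at this
  omega

end SteinbergAux

/-- Steinberg's formula in type `A`.  Let `λ, μ, ν` be partitions with
at most `n` parts, `|ν| = |λ| + |μ|`, and let `c` give the Littlewood–Richardson
coefficients, i.e. the structure constants in `S_λ S_μ = ∑_ν c_{λμ}^ν S_ν`.  Then
`c_{λμ}^ν = ∑_{σ,τ ∈ S_n} (-1)^σ (-1)^τ 𝔓(σ(λ+ρ) + τ(μ+ρ) - (ν+2ρ))`,
where `ρ = (n-1, …, 1, 0)` and `𝔓` is the Kostant partition function of `A_{n-1}`. -/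
theorem steinberg_formula (n : ℕ) (hn : 1 ≤ n) (lam mu nu : Fin n → ℕ)
    (hlam : Antitone lam) (hmu : Antitone mu) (hnu : Antitone nu)
    (hsize : ∑ i, nu i = ∑ i, lam i + ∑ i, mu i)
    (c : (Fin n → ℕ) → ℕ)
    (hc : schur n lam * schur n mu =
      ∑ ν ∈ partitionsOfSize n (∑ i, lam i + ∑ i, mu i),
        (c ν : FractionRing (MvPolynomial (Fin n) ℤ)) * schur n ν) :
    (c nu : ℤ) =
      ∑ σ : Equiv.Perm (Fin n), ∑ τ : Equiv.Perm (Fin n),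
        (Equiv.Perm.sign σ : ℤ) * (Equiv.Perm.sign τ : ℤ) *
          (kostant n (fun j : Fin n =>
            ((lam (σ j) + rho n (σ j) : ℕ) : ℤ) + ((mu (τ j) + rho n (τ j) : ℕ) : ℤ)
              - ((nu j + 2 * rho n j : ℕ) : ℤ)) : ℤ) := by
  classical
  have hV : vandermondePoly n ≠ 0 := SteinbergAux.vander_ne_zero (by omega)
  have hinj : Function.Injective
      (algebraMap (MvPolynomial (Fin n) ℤ) (FractionRing (MvPolynomial (Fin n) ℤ))) :=
    IsFractionRing.injective _ _
  have hψV : algebraMap (MvPolynomial (Fin n) ℤ) (FractionRing (MvPolynomial (Fin n) ℤ))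
      (vandermondePoly n) ≠ 0 := fun h => hV (hinj (by rw [h, map_zero]))
  have hνmem : nu ∈ partitionsOfSize n (∑ i, lam i + ∑ i, mu i) := by
    rw [partitionsOfSize, Finset.mem_filter, Finset.mem_Iic]
    refine ⟨?_, hnu, hsize⟩
    intro i
    calc nu i ≤ ∑ j, nu j :=
          Finset.single_le_sum (fun j _ => Nat.zero_le _) (Finset.mem_univ i)
      _ = ∑ i, lam i + ∑ i, mu i := hsize
  have hpoly : alternant n lam * alternant n mu
      = vandermondePoly n * ∑ ν' ∈ partitionsOfSize n (∑ i, lam i + ∑ i, mu i),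
          ((c ν' : ℤ) • alternant n ν') := by
    apply hinj
    rw [map_mul, map_mul, map_sum]
    have hsch : ∀ w : Fin n → ℕ,
        algebraMap (MvPolynomial (Fin n) ℤ) (FractionRing (MvPolynomial (Fin n) ℤ))
          (alternant n w)
        = schur n w * algebraMap (MvPolynomial (Fin n) ℤ)
            (FractionRing (MvPolynomial (Fin n) ℤ)) (vandermondePoly n) := by
      intro w
      rw [schur]
      field_simp
    rw [hsch lam, hsch mu]
    calc (schur n lam * algebraMap _ _ (vandermondePoly n))
          * (schur n mu * algebraMap _ _ (vandermondePoly n))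
        = (schur n lam * schur n mu)
          * (algebraMap _ _ (vandermondePoly n) * algebraMap _ _ (vandermondePoly n)) := by
          ring
      _ = (∑ ν' ∈ partitionsOfSize n (∑ i, lam i + ∑ i, mu i),
            (c ν' : FractionRing (MvPolynomial (Fin n) ℤ)) * schur n ν')
          * (algebraMap _ _ (vandermondePoly n) * algebraMap _ _ (vandermondePoly n)) := by
          rw [hc]
      _ = algebraMap _ _ (vandermondePoly n)
          * ∑ ν' ∈ partitionsOfSize n (∑ i, lam i + ∑ i, mu i),
              algebraMap (MvPolynomial (Fin n) ℤ) (FractionRing (MvPolynomial (Fin n) ℤ))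
                ((c ν' : ℤ) • alternant n ν') := by
          rw [Finset.sum_mul, Finset.mul_sum]
          apply Finset.sum_congr rfl
          intro ν' _
          have h1 : algebraMap (MvPolynomial (Fin n) ℤ) (FractionRing (MvPolynomial (Fin n) ℤ))
              ((c ν' : ℤ) • alternant n ν')
              = (c ν' : FractionRing (MvPolynomial (Fin n) ℤ))
                * algebraMap _ _ (alternant n ν') := by
            rw [zsmul_eq_mul, map_mul, map_intCast]
            push_cast
            ring
          rw [h1, hsch ν']
          ring
  set t : Fin n → ℤ := fun j => -((nu j + 2 * rho n j : ℕ) : ℤ) with ht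
  have hLHS : SteinbergAux.phi n t (alternant n lam * alternant n mu)
      = ∑ σ : Equiv.Perm (Fin n), ∑ τ : Equiv.Perm (Fin n),
          (Equiv.Perm.sign σ : ℤ) * (Equiv.Perm.sign τ : ℤ) *
            (kostant n (fun j : Fin n =>
              ((lam (σ j) + rho n (σ j) : ℕ) : ℤ) + ((mu (τ j) + rho n (τ j) : ℕ) : ℤ)
                - ((nu j + 2 * rho n j : ℕ) : ℤ)) : ℤ) := by
    rw [SteinbergAux.alternant_expand n lam, SteinbergAux.alternant_expand n mu,
      Finset.sum_mul_sum, map_sum]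
    apply Finset.sum_congr rfl
    intro σ _
    rw [map_sum]
    apply Finset.sum_congr rfl
    intro τ _
    rw [MvPolynomial.monomial_mul, SteinbergAux.phi_monomial]
    have harg : (fun m => t m
          + (((SteinbergAux.expF n lam σ + SteinbergAux.expF n mu τ) m : ℕ) : ℤ))
        = (fun j : Fin n =>
            ((lam (σ j) + rho n (σ j) : ℕ) : ℤ) + ((mu (τ j) + rho n (τ j) : ℕ) : ℤ)
              - ((nu j + 2 * rho n j : ℕ) : ℤ)) := by
      funext m
      rw [Finsupp.add_apply, SteinbergAux.expF_apply, SteinbergAux.expF_apply, ht]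
      push_cast
      ring
    rw [harg]
  have hRHS : SteinbergAux.phi n t
      (vandermondePoly n * ∑ ν' ∈ partitionsOfSize n (∑ i, lam i + ∑ i, mu i),
        ((c ν' : ℤ) • alternant n ν'))
      = (c nu : ℤ) := by
    rw [Finset.mul_sum, map_sum]
    have hterm : ∀ ν' ∈ partitionsOfSize n (∑ i, lam i + ∑ i, mu i),
        SteinbergAux.phi n t (vandermondePoly n * ((c ν' : ℤ) • alternant n ν'))
          = (c ν' : ℤ) * (if ν' = nu then 1 else 0) := by
      intro ν' hν'
      have hanti : Antitone ν' := by
        rw [partitionsOfSize, Finset.mem_filter] at hν'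
        exact hν'.2.1
      rw [mul_smul_comm, map_zsmul, smul_eq_mul]
      congr 1
      rw [SteinbergAux.vander_expand, SteinbergAux.alternant_expand n ν',
        Finset.sum_mul_sum, map_sum]
      have h1 : ∀ S ∈ (SteinbergAux.pairs n).powerset,
          SteinbergAux.phi n t (∑ κ : Equiv.Perm (Fin n),
            MvPolynomial.monomial (SteinbergAux.mS n S) ((-1:ℤ)^S.card)
              * MvPolynomial.monomial (SteinbergAux.expF n ν' κ) ((Equiv.Perm.sign κ : ℤ)))
          = ∑ κ : Equiv.Perm (Fin n), (Equiv.Perm.sign κ : ℤ) * ((-1:ℤ)^S.card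
              * kostant n (fun m =>
                  ((ν' (κ m) : ℤ) + (rho n (κ m) : ℤ) - ((nu m : ℤ) + (rho n m : ℤ)))
                    - SteinbergAux.sig S m)) := by
        intro S hS
        rw [map_sum]
        apply Finset.sum_congr rfl
        intro κ _
        rw [MvPolynomial.monomial_mul, SteinbergAux.phi_monomial]
        have harg : (fun m => t m
              + (((SteinbergAux.mS n S + SteinbergAux.expF n ν' κ) m : ℕ) : ℤ))
            = fun m =>
                ((ν' (κ m) : ℤ) + (rho n (κ m) : ℤ) - ((nu m : ℤ) + (rho n m : ℤ)))
                  - SteinbergAux.sig S m := by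
          funext m
          rw [Finsupp.add_apply, ht]
          push_cast
          rw [SteinbergAux.mS_apply (Finset.mem_powerset.mp hS) m,
            SteinbergAux.expF_apply]
          push_cast
          ring
        rw [harg]
        ring
      rw [Finset.sum_congr rfl h1, Finset.sum_comm]
      have h2 : ∀ κ : Equiv.Perm (Fin n),
          ∑ S ∈ (SteinbergAux.pairs n).powerset, (Equiv.Perm.sign κ : ℤ) * ((-1:ℤ)^S.card
            * kostant n (fun m =>
                ((ν' (κ m) : ℤ) + (rho n (κ m) : ℤ) - ((nu m : ℤ) + (rho n m : ℤ)))
                  - SteinbergAux.sig S m))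
          = (Equiv.Perm.sign κ : ℤ) *
              (if (fun m : Fin n =>
                  (ν' (κ m) : ℤ) + (rho n (κ m) : ℤ) - ((nu m : ℤ) + (rho n m : ℤ)))
                = (fun _ => 0) then 1 else 0) := by
        intro κ
        rw [← Finset.mul_sum]
        congr 1
        exact SteinbergAux.key2
          (fun m => (ν' (κ m) : ℤ) + (rho n (κ m) : ℤ) - ((nu m : ℤ) + (rho n m : ℤ)))
      rw [Finset.sum_congr rfl (fun κ _ => h2 κ)]
      have h3 : ∀ κ : Equiv.Perm (Fin n),
          ((fun m : Fin n =>
              (ν' (κ m) : ℤ) + (rho n (κ m) : ℤ) - ((nu m : ℤ) + (rho n m : ℤ)))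
            = (fun _ => 0)) ↔ (κ = 1 ∧ ν' = nu) := by
        intro κ
        constructor
        · intro h
          apply SteinbergAux.rigid hnu hanti κ
          intro m
          have := congrFun h m
          omega
        · rintro ⟨hκ, hvv⟩
          subst hκ
          subst hvv
          funext m
          simp
      by_cases hvv : ν' = nu
      · subst hvv
        rw [if_pos rfl]
        rw [Finset.sum_eq_single 1]
        · rw [if_pos ((h3 1).mpr ⟨rfl, rfl⟩)]
          simp
        · intro κ _ hκne
          rw [if_neg (fun h => hκne ((h3 κ).mp h).1), mul_zero]
        · intro h
          exact absurd (Finset.mem_univ _) h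
      · rw [if_neg hvv]
        apply Finset.sum_eq_zero
        intro κ _
        rw [if_neg (fun h => hvv ((h3 κ).mp h).2), mul_zero]
    rw [Finset.sum_congr rfl hterm]
    rw [Finset.sum_eq_single nu]
    · rw [if_pos rfl, mul_one]
    · intro ν' _ hne
      rw [if_neg hne, mul_zero]
    · intro h
      exact absurd hνmem h
  calc (c nu : ℤ)
      = SteinbergAux.phi n t
          (vandermondePoly n * ∑ ν' ∈ partitionsOfSize n (∑ i, lam i + ∑ i, mu i),
            ((c ν' : ℤ) • alternant n ν')) := hRHS.symm
    _ = SteinbergAux.phi n t (alternant n lam * alternant n mu) := by rw [hpoly]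
    _ = _ := hLHS
end
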